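/- Let ε > 0 with ε·2^(m+1) < δ (δ as in the perturbation construction), and let v'_i be the perturbed valuations. If an allocation X is EFX with respect to the perturbed valuations v'_i, then X is EFX with respect to the original valuations v_i. -/

import Mathlib

open Finset

/-!
Perturbing good `j` by `ε·2^(j+1)` raises the value of every bundle by a nonnegative amount
below `ε·2^(m+1) < δ`, a geometric sum. Since distinct bundle values under `v i` differ by at
least `δ`, a strict preference `v i (X j \ {g}) > v i (X i)` would survive the perturbation,
contradicting EFX for `v'`.
-/

theorem sum_two_pow_succ_lt {m : ℕ} (S : Finset (Fin m)) :
    ∑ j ∈ S, (2 : ℝ) ^ ((j : ℕ) + 1) < 2 ^ (m + 1) := by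
  have key := Nat.geomSum_lt le_rfl (s := S.map (Fin.valEmbedding.trans (addRightEmbedding 1)))
    (n := m + 1) (by simp)
  rw [sum_map] at key
  exact_mod_cast key

theorem le_of_add_le_add_of_separated {a b x y δ : ℝ} (hsep : a ≠ b → δ ≤ |a - b|)
    (hx : 0 ≤ x) (hy : y < δ) (h : a + x ≤ b + y) : a ≤ b := by
  by_contra! hba
  have hgap := hsep hba.ne'
  rw [abs_of_pos (sub_pos.2 hba)] at hgap
  linarith

/-- If an allocation `X` is EFX with respect to the perturbed valuations
`v'_i(g_j) = v_i(g_j) + ε·2^j` (with `ε·2^(m+1) < δ`), then `X` is EFX with respect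
to the original valuations `v_i`. -/
theorem efx_of_perturbed_efx {N : Type*} {m : ℕ}
    (v : N → Fin m → ℝ) (ε δ : ℝ) (hε : 0 < ε)
    (hδ : ∀ i : N, ∀ S T : Finset (Fin m),
      (∑ g ∈ S, v i g) ≠ (∑ g ∈ T, v i g) →
      δ ≤ |(∑ g ∈ S, v i g) - (∑ g ∈ T, v i g)|)
    (hεδ : ε * 2 ^ (m + 1) < δ)
    (v' : N → Fin m → ℝ)
    (hv' : ∀ i : N, ∀ j : Fin m, v' i j = v i j + ε * 2 ^ ((j : ℕ) + 1))
    (X : N → Finset (Fin m))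
    (hEFX' : ∀ i j : N, ∀ g ∈ X j,
      (∑ h ∈ (X j).erase g, v' i h) ≤ (∑ h ∈ X i, v' i h)) :
    ∀ i j : N, ∀ g ∈ X j,
      (∑ h ∈ (X j).erase g, v i h) ≤ (∑ h ∈ X i, v i h) := by
  intro i j g hg
  have hsum (S : Finset (Fin m)) :
      ∑ h ∈ S, v' i h = ∑ h ∈ S, v i h + ε * ∑ h ∈ S, (2 : ℝ) ^ ((h : ℕ) + 1) := by
    simp only [hv', sum_add_distrib, mul_sum]
  have hEFX := hEFX' i j g hg
  rw [hsum, hsum] at hEFX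
  refine le_of_add_le_add_of_separated (hδ i _ _) (by positivity) ?_ hEFX
  calc ε * ∑ h ∈ X i, (2 : ℝ) ^ ((h : ℕ) + 1)
      ≤ ε * 2 ^ (m + 1) := mul_le_mul_of_nonneg_left (sum_two_pow_succ_lt _).le hε.le
    _ < δ := hεδ
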